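/- arXiv:1710.09222 — 6 statements merged into one kernel-verified Lean document; each statement's English description precedes it below -/
import Mathlib

section
/- Every homogeneous polynomial h in ℤ[x_1, ..., x_n] of positive degree can be uniquely written as h = h^{(1)}·x_1 + h^{(2)}·(x_2 - x_1) + ⋯ + h^{(n)}·(x_n - x_{n-1}), where each h^{(r)} lies in ℤ[x_1, ..., x_r]. -/
/-!
The substitution `x_r ↦ x_r - x_{r-1}` (with `x_0 ↦ x_0`) is an automorphism of
`ℤ[x_0, …, x_{n-1}]` whose inverse is `x_r ↦ x_0 + ⋯ + x_r`, and both directions preserve every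
subring `ℤ[x_0, …, x_r]`. Transporting along it reduces the theorem to the triangular
decomposition `p = ∑ q_r · x_r` with `q_r ∈ ℤ[x_0, …, x_r]`, valid for any `p` without constant
term: existence by sorting the monomials of `p` by their largest variable, uniqueness by comparing
coefficients of `m · x_r` for the largest `r` with `q_r ≠ 0`.
-/

open MvPolynomial Finset

namespace MvPolynomial

section Supported

variable {R σ τ : Type*} [CommSemiring R]

theorem aeval_mem_supported {s : Set σ} {t : Set τ} {f : σ → MvPolynomial τ R}
    (hf : ∀ i ∈ s, f i ∈ supported R t) {p : MvPolynomial σ R} (hp : p ∈ supported R s) :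
    aeval f p ∈ supported R t := by
  have hle : (supported R s).map (aeval f) ≤ supported R t := by
    rw [supported_eq_adjoin_X, AlgHom.map_adjoin, Algebra.adjoin_le_iff]
    rintro _ ⟨_, ⟨i, hi, rfl⟩, rfl⟩
    simpa using hf i hi
  exact hle ⟨p, hp, rfl⟩

theorem coeff_eq_zero_of_mem_supported {s : Set σ} {p : MvPolynomial σ R}
    (hp : p ∈ supported R s) {m : σ →₀ ℕ} {i : σ} (hi : i ∉ s) (hm : m i ≠ 0) :
    coeff m p = 0 := by
  by_contra hc
  exact hi (mem_supported.1 hp ((mem_vars_iff_mem_support i).2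
    ⟨m, mem_support_iff.2 hc, Finsupp.mem_support_iff.2 hm⟩))

end Supported

section Triangular

variable {R σ : Type*} [LinearOrder σ]

theorem aeval_mem_supported_Iic [CommSemiring R] {f : σ → MvPolynomial σ R}
    (hf : ∀ i, f i ∈ supported R (Set.Iic i)) {r : σ} {p : MvPolynomial σ R}
    (hp : p ∈ supported R (Set.Iic r)) : aeval f p ∈ supported R (Set.Iic r) := by
  refine aeval_mem_supported (fun i hi => ?_) hp
  exact supported_mono (Set.Iic_subset_Iic.2 hi) (hf i)

theorem exists_monomial_eq_mul_X [CommSemiring R] {m : σ →₀ ℕ} (hm : m ≠ 0) (c : R) :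
    ∃ r, ∃ q ∈ supported R (Set.Iic r), monomial m c = q * X r := by
  classical
  have hne : m.support.Nonempty := Finsupp.support_nonempty_iff.2 hm
  set r := m.support.max' hne
  have hr : Finsupp.single r 1 ≤ m := Finsupp.single_le_iff.2 <|
    Nat.one_le_iff_ne_zero.2 (Finsupp.mem_support_iff.1 (m.support.max'_mem hne))
  refine ⟨r, monomial (m - Finsupp.single r 1) c, ?_, ?_⟩
  · rw [mem_supported]
    intro i hi
    obtain ⟨d, hd, hid⟩ := (mem_vars_iff_mem_support i).1 hi
    rw [mem_singleton.1 (support_monomial_subset hd)] at hid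
    exact m.support.le_max' i (Finsupp.support_tsub hid)
  · rw [← pow_one (X r), ← monomial_add_single, tsub_add_cancel_of_le hr]

theorem exists_sum_mul_X_of_constantCoeff_eq_zero [CommSemiring R] [Fintype σ]
    {p : MvPolynomial σ R} (hp : constantCoeff p = 0) :
    ∃ q : σ → MvPolynomial σ R, (∀ r, q r ∈ supported R (Set.Iic r)) ∧ p = ∑ r, q r * X r := by
  classical
  rw [← support_sum_monomial_coeff p]
  refine sum_induction _ (fun p => ∃ q : σ → MvPolynomial σ R,
      (∀ r, q r ∈ supported R (Set.Iic r)) ∧ p = ∑ r, q r * X r)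
    ?_ ⟨0, fun _ => zero_mem _, by simp⟩ fun m hm => ?_
  · rintro _ _ ⟨q, hq, rfl⟩ ⟨q', hq', rfl⟩
    refine ⟨q + q', fun r => add_mem (hq r) (hq' r), ?_⟩
    simp only [Pi.add_apply, add_mul, sum_add_distrib]
  · have hm0 : m ≠ 0 := by
      rintro rfl
      exact mem_support_iff.1 hm hp
    obtain ⟨r, q, hq, hmq⟩ := exists_monomial_eq_mul_X hm0 (coeff m p)
    refine ⟨Pi.single r q, fun s => ?_, ?_⟩
    · rcases eq_or_ne s r with rfl | hs
      · simpa using hq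
      · simp [hs]
    · rw [hmq, Fintype.sum_eq_single r fun s hs => by simp [hs]]
      simp

theorem eq_zero_of_sum_mul_X_eq_zero [CommRing R] [Fintype σ] {q : σ → MvPolynomial σ R}
    (hq : ∀ r, q r ∈ supported R (Set.Iic r)) (hsum : ∑ r, q r * X r = 0) : q = 0 := by
  funext r
  induction r using WellFoundedGT.induction with
  | _ r ih =>
  ext m
  have hcoeff := congr_arg (coeff (m + Finsupp.single r 1)) hsum
  rw [coeff_sum, sum_eq_single r, coeff_mul_X] at hcoeff
  · simpa using hcoeff
  · intro s _ hsr
    rcases hsr.lt_or_gt with hlt | hgt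
    · exact coeff_eq_zero_of_mem_supported (s := Set.Iic s) (i := r)
        (mul_mem (hq s) (Algebra.subset_adjoin ⟨s, le_rfl, rfl⟩)) (not_le.2 hlt) (by simp)
    · rw [ih s hgt, Pi.zero_apply, zero_mul, coeff_zero]
  · simp

end Triangular

section Transport

variable {R σ : Type*} [CommRing R] [LinearOrder σ] [Fintype σ]

theorem existsUnique_sum_mul_X {p : MvPolynomial σ R} (hp : constantCoeff p = 0) :
    ∃! q : σ → MvPolynomial σ R, (∀ r, q r ∈ supported R (Set.Iic r)) ∧ p = ∑ r, q r * X r := by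
  obtain ⟨q, hq, rfl⟩ := exists_sum_mul_X_of_constantCoeff_eq_zero hp
  refine ⟨q, ⟨hq, rfl⟩, fun q' ⟨hq', hsum⟩ => ?_⟩
  funext r
  have hdiff : ∑ r, (q' r - q r) * X r = 0 := by
    simp only [sub_mul, sum_sub_distrib, ← hsum, sub_self]
  exact sub_eq_zero.1 <|
    congr_fun (eq_zero_of_sum_mul_X_eq_zero (fun r => sub_mem (hq' r) (hq r)) hdiff) r

theorem existsUnique_sum_mul_map_X (e : MvPolynomial σ R ≃ₐ[R] MvPolynomial σ R)
    (he : ∀ r, ∀ p ∈ supported R (Set.Iic r), e p ∈ supported R (Set.Iic r))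
    (he_symm : ∀ r, ∀ p ∈ supported R (Set.Iic r), e.symm p ∈ supported R (Set.Iic r))
    {p : MvPolynomial σ R} (hp : constantCoeff (e.symm p) = 0) :
    ∃! g : σ → MvPolynomial σ R,
      (∀ r, g r ∈ supported R (Set.Iic r)) ∧ p = ∑ r, g r * e (X r) := by
  obtain ⟨q, ⟨hq, hpq⟩, hq_unique⟩ := existsUnique_sum_mul_X hp
  refine ⟨fun r => e (q r), ⟨fun r => he r _ (hq r), ?_⟩, fun g ⟨hg, hpg⟩ => ?_⟩
  · rw [← e.apply_symm_apply p, hpq, map_sum]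
    simp only [map_mul]
  · have hsymm : (fun r => e.symm (g r)) = q := by
      refine hq_unique _ ⟨fun r => he_symm r _ (hg r), ?_⟩
      rw [hpg, map_sum]
      simp only [map_mul, AlgEquiv.symm_apply_apply]
    funext r
    rw [← hsymm, AlgEquiv.apply_symm_apply]

end Transport

end MvPolynomial

section BackwardDiff

variable {M N : Type*} [AddCommGroup M] [AddCommGroup N] {n : ℕ}

def backwardDiff (f : Fin n → M) (r : Fin n) : M :=
  f r - if _ : (r : ℕ) = 0 then 0 else f ⟨r - 1, (Nat.sub_le _ _).trans_lt r.isLt⟩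

theorem sum_Iio_eq_dite (f : Fin n → M) (r : Fin n) :
    ∑ i ∈ Iio r, f i = if _ : (r : ℕ) = 0 then 0
      else ∑ i ∈ Iic (⟨r - 1, (Nat.sub_le _ _).trans_lt r.isLt⟩ : Fin n), f i := by
  split_ifs with hr
  · refine sum_eq_zero fun i hi => absurd (Fin.lt_def.1 (mem_Iio.1 hi)) (by omega)
  · congr 1
    ext i
    simp only [mem_Iio, mem_Iic, Fin.lt_def, Fin.le_def]
    omega

theorem backwardDiff_sum_Iic (f : Fin n → M) (r : Fin n) :
    backwardDiff (fun s => ∑ i ∈ Iic s, f i) r = f r := by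
  rw [backwardDiff, ← sum_Iio_eq_dite, ← Iio_insert, sum_insert notMem_Iio_self,
    add_sub_cancel_right]

theorem sum_Iic_backwardDiff (f : Fin n → M) (r : Fin n) :
    ∑ i ∈ Iic r, backwardDiff f i = f r := by
  induction r using WellFoundedLT.induction with
  | _ r ih =>
  rw [← Iio_insert, sum_insert notMem_Iio_self, sum_Iio_eq_dite, backwardDiff]
  split_ifs with hr
  · simp
  · rw [ih _ (Fin.lt_def.2 (by simp only; omega)), sub_add_cancel]

theorem map_backwardDiff {F : Type*} [FunLike F M N] [AddMonoidHomClass F M N] (φ : F)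
    (f : Fin n → M) (r : Fin n) : φ (backwardDiff f r) = backwardDiff (φ ∘ f) r := by
  unfold backwardDiff
  split_ifs <;> simp

end BackwardDiff

namespace MvPolynomial

variable (R : Type*) [CommRing R] (n : ℕ)

noncomputable def backwardDiffAlgEquiv : MvPolynomial (Fin n) R ≃ₐ[R] MvPolynomial (Fin n) R :=
  AlgEquiv.ofAlgHom (aeval (backwardDiff X)) (aeval fun r => ∑ i ∈ Iic r, X i)
    (algHom_ext fun r => by simp [map_sum, sum_Iic_backwardDiff])
    (algHom_ext fun r => by simp [map_backwardDiff, Function.comp_def, backwardDiff_sum_Iic])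

variable {R n}

theorem backwardDiffAlgEquiv_X (r : Fin n) :
    backwardDiffAlgEquiv R n (X r) = backwardDiff X r :=
  aeval_X _ _

theorem backwardDiff_X_mem_supported (r : Fin n) :
    backwardDiff (X : Fin n → MvPolynomial (Fin n) R) r ∈ supported R (Set.Iic r) := by
  refine sub_mem (Algebra.subset_adjoin ⟨r, Set.mem_Iic.2 le_rfl, rfl⟩) ?_
  split_ifs
  · exact zero_mem _
  · exact Algebra.subset_adjoin ⟨_, Fin.le_def.2 (Nat.sub_le _ _), rfl⟩

theorem sum_Iic_X_mem_supported (r : Fin n) :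
    ∑ i ∈ Iic r, (X i : MvPolynomial (Fin n) R) ∈ supported R (Set.Iic r) :=
  sum_mem fun i hi => Algebra.subset_adjoin ⟨i, mem_Iic.1 hi, rfl⟩

theorem constantCoeff_backwardDiffAlgEquiv_symm {p : MvPolynomial (Fin n) R} {d : ℕ}
    (hd : 0 < d) (hp : p.IsHomogeneous d) :
    constantCoeff ((backwardDiffAlgEquiv R n).symm p) = 0 := by
  have hS : ∀ r : Fin n, (∑ i ∈ Iic r, (X i : MvPolynomial (Fin n) R)).IsHomogeneous 1 :=
    fun r => IsHomogeneous.sum _ _ _ fun i _ => isHomogeneous_X R i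
  exact (hp.aeval _ hS).coeff_eq_zero (by simp; omega)

end MvPolynomial

open MvPolynomial in
/-- Taylor expansion: every homogeneous polynomial `h` of positive degree in
`ℤ[x_0,...,x_{n-1}]` is uniquely `h = g_0·x_0 + ∑_{r≥1} g_r·(x_r - x_{r-1})`
with `g_r ∈ ℤ[x_0,...,x_r]`. -/
theorem stmt_8 (n : ℕ) (h : MvPolynomial (Fin n) ℤ) (d : ℕ) (hd : 0 < d)
    (hh : h.IsHomogeneous d) :
    ∃! g : Fin n → MvPolynomial (Fin n) ℤ,
      (∀ r, g r ∈ MvPolynomial.supported ℤ {i : Fin n | i ≤ r}) ∧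
      h = ∑ r : Fin n, g r *
        (X r - if hr : (r : ℕ) = 0 then 0
               else X ⟨(r : ℕ) - 1, by have := r.isLt; omega⟩) := by
  have key := existsUnique_sum_mul_map_X (backwardDiffAlgEquiv ℤ n)
    (fun _ _ hp => aeval_mem_supported_Iic backwardDiff_X_mem_supported hp)
    (fun _ _ hp => aeval_mem_supported_Iic sum_Iic_X_mem_supported hp)
    (constantCoeff_backwardDiffAlgEquiv_symm hd hh)
  simp only [backwardDiffAlgEquiv_X, backwardDiff] at key
  exact key
end

section
/- For the graded ring quotient ℤ[x_1,...,x_n]/⟨e_1,...,e_n⟩ (where e_r is the r-th elementary symmetric polynomial), the image of x_1^r under the additional identification x_1 = x_2 = ⋯ = x_n yields the ring ℤ[x]/⟨binom(n,1)·x, binom(n,2)·x^2, ..., binom(n,n)·x^n⟩, in which the additive order of x^r equals b_{n,r} = gcd{binom(n,1),...,binom(n,r)} for each 1 ≤ r ≤ n. -/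
/-!
An element of the ideal generated by monomials `c k * X ^ k` has its `r`-th coefficient in the
ideal generated by the `c k` with `k ≤ r`; conversely `c k * X ^ r = X ^ (r - k) * (c k * X ^ k)`
for those `k`. Hence `m • X ^ r` vanishes in the quotient exactly when `m` lies in the ideal of `ℤ`
generated by `C(n,1), …, C(n,r)`, which is generated by their gcd by Bézout.
-/

open Polynomial

theorem addOrderOf_eq_of_nsmul_eq_zero_iff {G : Type*} [AddMonoid G] {x : G} {b : ℕ}
    (h : ∀ m : ℕ, m • x = 0 ↔ b ∣ m) : addOrderOf x = b :=
  eq_of_forall_dvd fun m => by rw [addOrderOf_dvd_iff_nsmul_eq_zero, h]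

theorem Ideal.span_image_eq_span_finset_gcd {R ι : Type*} [CommRing R] [IsBezout R]
    [NormalizedGCDMonoid R] (s : Finset ι) (f : ι → R) :
    Ideal.span (f '' s) = Ideal.span {s.gcd f} := by
  refine le_antisymm ?_ ?_
  · rw [Ideal.span_le]
    rintro _ ⟨i, hi, rfl⟩
    exact Ideal.mem_span_singleton.mpr (Finset.gcd_dvd hi)
  · rw [Ideal.span_singleton_le_iff_mem]
    obtain ⟨g, hg⟩ := s.gcd_eq_sum_mul f
    rw [hg]
    exact Ideal.sum_mem _ fun i hi => Ideal.mul_mem_right _ _ (Ideal.subset_span ⟨i, hi, rfl⟩)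

theorem Int.natCast_finset_gcd {ι : Type*} (s : Finset ι) (f : ι → ℕ) :
    ((s.gcd f : ℕ) : ℤ) = s.gcd fun i => (f i : ℤ) := by
  classical
  induction s using Finset.induction_on with
  | empty => simp
  | insert a s ha ih =>
    rw [Finset.gcd_insert, Finset.gcd_insert, ← ih, ← Int.coe_gcd, Int.gcd_natCast_natCast]
    rfl

namespace Polynomial

variable {R : Type*} [CommRing R]

theorem coeff_mul_mem_span_of_mem_span_monomials {s : Set ℕ} {c : ℕ → R} {p : R[X]}
    (hp : p ∈ Ideal.span ((fun k => C (c k) * X ^ k) '' s)) (q : R[X]) (r : ℕ) :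
    (q * p).coeff r ∈ Ideal.span (c '' {k ∈ s | k ≤ r}) := by
  induction hp using Submodule.span_induction generalizing q with
  | mem _ hx =>
    obtain ⟨k, hk, rfl⟩ := hx
    rw [← mul_assoc, coeff_mul_X_pow']
    split_ifs with hkr
    · rw [coeff_mul_C]
      exact Ideal.mul_mem_left _ _ (Ideal.subset_span ⟨k, ⟨hk, hkr⟩, rfl⟩)
    · exact zero_mem _
  | zero => simp
  | add _ _ _ _ hx hy => rw [mul_add, coeff_add]; exact add_mem (hx q) (hy q)
  | smul a _ _ hx => rw [smul_eq_mul, ← mul_assoc]; exact hx (q * a)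

theorem C_mul_X_pow_mem_span_monomials_iff {s : Set ℕ} {c : ℕ → R} {a : R} {r : ℕ} :
    C a * X ^ r ∈ Ideal.span ((fun k => C (c k) * X ^ k) '' s) ↔
      a ∈ Ideal.span (c '' {k ∈ s | k ≤ r}) := by
  constructor
  · intro h
    simpa using coeff_mul_mem_span_of_mem_span_monomials h 1 r
  · intro ha
    rw [C_mul_X_pow_eq_monomial]
    refine Submodule.span_le (p := ((Ideal.span _).restrictScalars R).comap (monomial r))
      |>.mpr ?_ ha
    rintro _ ⟨k, ⟨hk, hkr⟩, rfl⟩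
    have hfactor : monomial r (c k) = X ^ (r - k) * (C (c k) * X ^ k) := by
      rw [← C_mul_X_pow_eq_monomial, mul_left_comm, ← pow_add, Nat.sub_add_cancel hkr]
    change monomial r (c k) ∈ Ideal.span _
    rw [hfactor]
    exact Ideal.mul_mem_left _ _ (Ideal.subset_span ⟨k, hk, rfl⟩)

end Polynomial

open Polynomial in
theorem stmt_11_general (n r : ℕ) (hrn : r ≤ n) :
    addOrderOf ((Ideal.Quotient.mk (Ideal.span
        {q : Polynomial ℤ | ∃ k, 1 ≤ k ∧ k ≤ n ∧ q = C (n.choose k : ℤ) * X ^ k}))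
      ((X : Polynomial ℤ) ^ r)) = (Finset.Icc 1 r).gcd n.choose := by
  have hgens : {q : ℤ[X] | ∃ k, 1 ≤ k ∧ k ≤ n ∧ q = C (n.choose k : ℤ) * X ^ k} =
      (fun k => C (n.choose k : ℤ) * X ^ k) '' Set.Icc 1 n := by
    ext q; simp [eq_comm, and_assoc]
  have hdegs : {k ∈ Set.Icc 1 n | k ≤ r} = ↑(Finset.Icc 1 r) := by
    ext k; simp only [Set.mem_ofPred_eq, Set.mem_Icc, Finset.coe_Icc]; omega
  refine addOrderOf_eq_of_nsmul_eq_zero_iff fun m => ?_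
  rw [← map_nsmul, Ideal.Quotient.eq_zero_iff_mem, nsmul_eq_mul, ← C_eq_natCast, hgens,
    C_mul_X_pow_mem_span_monomials_iff, hdegs, Ideal.span_image_eq_span_finset_gcd,
    ← Int.natCast_finset_gcd, Ideal.mem_span_singleton, Int.natCast_dvd_natCast]

open Polynomial in
/-- In `ℤ[x]/⟨C(n,1)x, C(n,2)x², ..., C(n,n)xⁿ⟩` the additive order of the class
of `x^r` equals `b_{n,r} = gcd{C(n,1),...,C(n,r)}`, for `1 ≤ r ≤ n`. -/
theorem stmt_11 (n r : ℕ) (hn : 2 ≤ n) (hr1 : 1 ≤ r) (hrn : r ≤ n) :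
    addOrderOf ((Ideal.Quotient.mk (Ideal.span
        {q : Polynomial ℤ | ∃ k, 1 ≤ k ∧ k ≤ n ∧ q = C (n.choose k : ℤ) * X ^ k}))
      ((X : Polynomial ℤ) ^ r)) = (Finset.Icc 1 r).gcd n.choose :=
  stmt_11_general n r hrn
end

section
/- If n = p^r with p prime, then for every 0 ≤ s ≤ r, gcd{binom(p^r, 1), binom(p^r, 2), ..., binom(p^r, p^s)} = p^{r-s}. -/
/-!
By Kummer, `v_p (C(p^r, k)) = r - v_p k` for `0 < k ≤ p^r`. On `1 ≤ k ≤ p^s` we have `v_p k ≤ s`,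
so `p^(r-s)` divides every term; the term `k = 1` equals `p^r`, so the gcd is a power of `p`,
and the term `k = p^s` has valuation exactly `r - s`.
-/

namespace Nat

variable {p r s k : ℕ}

theorem factorization_choose_prime_pow_prime_pow (hp : p.Prime) (hs : s ≤ r) :
    ((p ^ r).choose (p ^ s)).factorization p = r - s := by
  rw [factorization_choose_prime_pow hp (pow_le_pow_right₀ hp.one_le hs) (pow_ne_zero s hp.ne_zero),
    hp.factorization_pow, Finsupp.single_eq_same]

theorem pow_sub_dvd_choose_prime_pow (hp : p.Prime) (hs : s ≤ r) (hk0 : k ≠ 0)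
    (hks : k ≤ p ^ s) : p ^ (r - s) ∣ (p ^ r).choose k := by
  have hkr : k ≤ p ^ r := hks.trans (pow_le_pow_right₀ hp.one_le hs)
  rw [hp.pow_dvd_iff_le_factorization (choose_ne_zero hkr), factorization_choose_prime_pow hp hkr hk0]
  have := factorization_le_of_le_pow hks
  omega

end Nat

/-- For `n = p^r` a prime power and `0 ≤ s ≤ r`:
`gcd{C(p^r,1),...,C(p^r,p^s)} = p^{r-s}`. -/
theorem stmt_13 (p r s : ℕ) (hp : p.Prime) (hs : s ≤ r) :
    (Finset.Icc 1 (p ^ s)).gcd (p ^ r).choose = p ^ (r - s) := by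
  set g := (Finset.Icc 1 (p ^ s)).gcd (p ^ r).choose
  have hps : 1 ≤ p ^ s := Nat.one_le_pow _ _ hp.pos
  refine Nat.dvd_antisymm ?_ (Finset.dvd_gcd fun k hk => ?_)
  · have hg_dvd : g ∣ p ^ r := by
      simpa using Finset.gcd_dvd (f := (p ^ r).choose) (Finset.mem_Icc.2 ⟨le_rfl, hps⟩)
    obtain ⟨i, -, hgi⟩ := (Nat.dvd_prime_pow hp).1 hg_dvd
    have hg_dvd_top : p ^ i ∣ (p ^ r).choose (p ^ s) :=
      hgi ▸ Finset.gcd_dvd (Finset.mem_Icc.2 ⟨hps, le_rfl⟩)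
    rw [hp.pow_dvd_iff_le_factorization (Nat.choose_ne_zero (Nat.pow_le_pow_right hp.pos hs)),
      Nat.factorization_choose_prime_pow_prime_pow hp hs] at hg_dvd_top
    exact hgi ▸ Nat.pow_dvd_pow p hg_dvd_top
  · obtain ⟨hk1, hks⟩ := Finset.mem_Icc.1 hk
    exact Nat.pow_sub_dvd_choose_prime_pow hp hs (by omega) hks
end

section
/- Let n ≥ 2 with prime factorization p_1^{r_1}⋯p_t^{r_t} and let b_{n,k} = gcd{binom(n,1),...,binom(n,k)}. Then for any 1 ≤ k ≤ n, b_{n,k} = ∏_{i=1}^{t} p_i^{max(0, r_i - ⌊log_{p_i} k⌋')} where ⌊log_{p_i} k⌋' denotes the number of powers p_i^s (s ≥ 1) with p_i^s ≤ k. Equivalently, the p_i-adic valuation of b_{n,k} equals max(0, r_i − #{s ≥ 1 : p_i^s ≤ k}). -/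
/-!
From `i * C(n, i) = n * C(n - 1, i - 1)`, every `C(n, i)` with `1 ≤ i ≤ k` has
`v_p C(n, i) ≥ v_p n - v_p i ≥ v_p n - log_p k`. The bound is attained at `i = p ^ m` with
`m = min (log_p k) (v_p n)`: as `p ^ m ∣ n`, Lucas' theorem gives `C(n - 1, p ^ m - 1) ≡ 1 mod p`,
hence `v_p C(n, p ^ m) = v_p n - m`. Finally `#{s ≥ 1 : p ^ s ≤ k} = log_p k`.
-/

open Finset

namespace Nat

theorem card_filter_pow_le_eq_log {p : ℕ} (hp : 1 < p) (k : ℕ) :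
    #{s ∈ Icc 1 k | p ^ s ≤ k} = log p k := by
  rcases k.eq_zero_or_pos with rfl | hk
  · simp
  suffices {s ∈ Icc 1 k | p ^ s ≤ k} = Icc 1 (log p k) by simp [this]
  ext s
  simp only [mem_filter, mem_Icc, ← le_log_iff_pow_le hp hk.ne']
  have : s < p ^ s := Nat.lt_pow_self hp
  constructor
  · rintro ⟨⟨h1, -⟩, h⟩; exact ⟨h1, h⟩
  · rintro ⟨h1, h⟩
    exact ⟨⟨h1, (this.trans_le ((le_log_iff_pow_le hp hk.ne').mp h)).le⟩, h⟩

theorem padicValNat_finset_gcd_eq {ι : Type*} {p : ℕ} [Fact p.Prime] {s : Finset ι} {f : ι → ℕ}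
    {a : ℕ} {i : ι} (hle : ∀ j ∈ s, a ≤ padicValNat p (f j)) (hi : i ∈ s) (hfi : f i ≠ 0)
    (hfia : padicValNat p (f i) = a) : padicValNat p (s.gcd f) = a := by
  have hgcd : s.gcd f ≠ 0 := fun h => hfi (Finset.gcd_eq_zero_iff.mp h i hi)
  apply le_antisymm
  · rw [← hfia, ← padicValNat_dvd_iff_le hfi]
    exact pow_padicValNat_dvd.trans (Finset.gcd_dvd hi)
  · rw [← padicValNat_dvd_iff_le hgcd]
    exact Finset.dvd_gcd fun j hj => (padicValNat_dvd_iff _ _).mpr (Or.inr (hle j hj))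

variable {p : ℕ} [hp : Fact p.Prime]

theorem choose_mul_sub_one_modEq {a b : ℕ} (ha : a ≠ 0) (hb : b ≠ 0) :
    (p * a - 1).choose (p * b - 1) ≡ (a - 1).choose (b - 1) [MOD p] := by
  have hp0 := hp.out.pos
  have digits : ∀ x ≠ 0, p * x - 1 = p - 1 + p * (x - 1) := fun x hx => by
    obtain ⟨y, rfl⟩ := exists_eq_add_one_of_ne_zero hx
    rw [Nat.add_sub_cancel, Nat.mul_add_one]
    omega
  have hmod : ∀ x ≠ 0, (p * x - 1) % p = p - 1 := fun x hx => by
    rw [digits x hx, Nat.add_mul_mod_self_left, Nat.mod_eq_of_lt (by omega)]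
  have hdiv : ∀ x ≠ 0, (p * x - 1) / p = x - 1 := fun x hx => by
    rw [digits x hx, Nat.add_mul_div_left _ _ hp0, Nat.div_eq_of_lt (by omega), zero_add]
  have := Choose.choose_modEq_choose_mod_mul_choose_div_nat (p := p)
    (n := p * a - 1) (k := p * b - 1)
  rwa [hmod a ha, hmod b hb, hdiv a ha, hdiv b hb, choose_self, one_mul] at this

/-- By Lucas' theorem: the last `m` base-`p` digits of `n - 1` and of `p ^ m - 1` all equal
`p - 1`. -/
theorem choose_sub_one_pow_sub_one_modEq_one {n : ℕ} (m : ℕ) (hn : n ≠ 0) (hdvd : p ^ m ∣ n) :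
    (n - 1).choose (p ^ m - 1) ≡ 1 [MOD p] := by
  induction m generalizing n with
  | zero => simp [Nat.ModEq]
  | succ m ih =>
    obtain ⟨c, rfl⟩ : p ∣ n := (dvd_pow_self p m.succ_ne_zero).trans hdvd
    have hc : c ≠ 0 := right_ne_zero_of_mul hn
    rw [pow_succ', Nat.mul_dvd_mul_iff_left hp.out.pos] at hdvd
    rw [pow_succ']
    exact (choose_mul_sub_one_modEq hc (pow_ne_zero m hp.out.ne_zero)).trans (ih hc hdvd)

theorem padicValNat_add_padicValNat_choose_sub_one {n i : ℕ} (hi : i ≠ 0) (hin : i ≤ n) :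
    padicValNat p n + padicValNat p ((n - 1).choose (i - 1)) =
      padicValNat p (n.choose i) + padicValNat p i := by
  have hn : n ≠ 0 := by omega
  have hchoose : (n - 1).choose (i - 1) ≠ 0 := (choose_pos (by omega)).ne'
  have key : n * (n - 1).choose (i - 1) = n.choose i * i := by
    have := add_one_mul_choose_eq (n - 1) (i - 1)
    rwa [Nat.sub_add_cancel (by omega), Nat.sub_add_cancel (by omega)] at this
  rw [← padicValNat.mul hn hchoose, ← padicValNat.mul (choose_pos hin).ne' hi, key]

theorem padicValNat_le_padicValNat_choose_add {n i : ℕ} (hi : i ≠ 0) (hin : i ≤ n) :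
    padicValNat p n ≤ padicValNat p (n.choose i) + padicValNat p i :=
  padicValNat_add_padicValNat_choose_sub_one (p := p) hi hin ▸ Nat.le_add_right _ _

theorem padicValNat_choose_pow {n m : ℕ} (hn : n ≠ 0) (hdvd : p ^ m ∣ n) :
    padicValNat p (n.choose (p ^ m)) = padicValNat p n - m := by
  have hcoprime : padicValNat p ((n - 1).choose (p ^ m - 1)) = 0 := by
    refine padicValNat.eq_zero_of_not_dvd fun h => hp.out.not_dvd_one (modEq_zero_iff_dvd.mp ?_)
    exact (choose_sub_one_pow_sub_one_modEq_one m hn hdvd).symm.trans (modEq_zero_iff_dvd.mpr h)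
  have := padicValNat_add_padicValNat_choose_sub_one (p := p) (pow_ne_zero m hp.out.ne_zero)
    (Nat.le_of_dvd (Nat.pos_of_ne_zero hn) hdvd)
  rw [hcoprime, padicValNat.prime_pow] at this
  omega

end Nat

theorem stmt_14_general (n k p : ℕ) (hk1 : 1 ≤ k) (hkn : k ≤ n)
    (hp : p.Prime) :
    padicValNat p ((Finset.Icc 1 k).gcd n.choose) =
      padicValNat p n - ((Finset.Icc 1 k).filter (fun s => p ^ s ≤ k)).card := by
  have := Fact.mk hp
  rw [Nat.card_filter_pow_le_eq_log hp.one_lt]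
  set m := min (Nat.log p k) (padicValNat p n)
  have hpm_dvd : p ^ m ∣ n := (pow_dvd_pow p (min_le_right _ _)).trans pow_padicValNat_dvd
  have hpm_le : p ^ m ≤ k := (Nat.pow_le_pow_right hp.pos (min_le_left _ _)).trans
    (Nat.pow_log_le_self p (by omega))
  refine Nat.padicValNat_finset_gcd_eq (fun i hi => ?_) (i := p ^ m)
    (mem_Icc.mpr ⟨Nat.one_le_pow _ _ hp.pos, hpm_le⟩) (Nat.choose_pos (hpm_le.trans hkn)).ne' ?_
  · obtain ⟨hi1, hik⟩ := mem_Icc.mp hi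
    have hchoose := Nat.padicValNat_le_padicValNat_choose_add (p := p) (by omega) (hik.trans hkn)
    have hlog := (padicValNat_le_nat_log i).trans (Nat.log_mono_right (b := p) hik)
    omega
  · rw [Nat.padicValNat_choose_pow (by omega) hpm_dvd]
    omega

/-- The `p`-adic valuation of `b_{n,k} = gcd{C(n,1),...,C(n,k)}` at a prime factor `p` of `n`
equals `v_p(n) − #{s ≥ 1 : p^s ≤ k}` (truncated subtraction realizing `max(0,·)`). -/
theorem stmt_14 (n k p : ℕ) (hn : 2 ≤ n) (hk1 : 1 ≤ k) (hkn : k ≤ n)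
    (hp : p.Prime) (hpn : p ∣ n) :
    padicValNat p ((Finset.Icc 1 k).gcd n.choose) =
      padicValNat p n - ((Finset.Icc 1 k).filter (fun s => p ^ s ≤ k)).card :=
  stmt_14_general n k p hk1 hkn hp
end

section
/- For a prime p and integers r ≥ 1, the ring J_{p,r} = ℤ[ω]⁺/⟨p^r ω, p^{r-1} ω^p, p^{r-2} ω^{p²}, ..., ω^{p^r}⟩ (positive-degree part of ℤ[ω] modulo the listed relations) is a finite abelian group in each degree, and the additive order of ω^k in J_{p,r} equals p^{r-s} where s = #{j ≥ 1 : p^j ≤ k} (and ω^k = 0 when k ≥ p^r). -/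
/-!
Every relation `p^{r-j} ω^{p^j}` with `p^j ≤ k` is a multiple of `p^{r-t}`, where
`t = min r (log_p k)`, and the relations of higher degree do not touch coefficients of degree `≤ k`.
Hence the coefficient of `ω^k` of every element of the ideal is divisible by `p^{r-t}`, while
`p^{r-t} ω^k = ω^{k-p^t} · p^{r-t} ω^{p^t}` lies in the ideal.
-/

open Polynomial

theorem Nat.filter_Icc_pow_le_eq_Icc_log {b : ℕ} (hb : 1 < b) (n : ℕ) :
    (Finset.Icc 1 n).filter (fun j => b ^ j ≤ n) = Finset.Icc 1 (Nat.log b n) := by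
  ext j
  simp only [Finset.mem_filter, Finset.mem_Icc]
  constructor
  · rintro ⟨⟨hj, -⟩, hpow⟩
    exact ⟨hj, Nat.le_log_of_pow_le hb hpow⟩
  · rintro ⟨hj, hlog⟩
    have hn : n ≠ 0 := by
      rintro rfl
      simp only [Nat.log_zero_right] at hlog
      omega
    have hpow : b ^ j ≤ n := Nat.pow_le_of_le_log hn hlog
    exact ⟨⟨hj, (Nat.lt_pow_self hb).le.trans hpow⟩, hpow⟩

theorem Nat.card_filter_Icc_pow_le {b : ℕ} (hb : 1 < b) (n : ℕ) :
    ((Finset.Icc 1 n).filter (fun j => b ^ j ≤ n)).card = Nat.log b n := by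
  rw [Nat.filter_Icc_pow_le_eq_Icc_log hb, Nat.card_Icc, Nat.add_sub_cancel]

theorem Polynomial.dvd_coeff_of_mem_span {R : Type*} [CommRing R] {S : Set R[X]} {d : R} {k : ℕ}
    (hS : ∀ q ∈ S, ∀ m ≤ k, d ∣ q.coeff m) {f : R[X]} (hf : f ∈ Ideal.span S) :
    ∀ m ≤ k, d ∣ f.coeff m := by
  induction hf using Submodule.span_induction with
  | mem q hq => exact hS q hq
  | zero => simp
  | add f g _ _ hf hg => exact fun m hm => (coeff_add f g m).symm ▸ dvd_add (hf m hm) (hg m hm)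
  | smul a f _ hf =>
    intro m hm
    rw [smul_eq_mul, coeff_mul]
    refine Finset.dvd_sum fun ij hij => Dvd.dvd.mul_left (hf ij.2 ?_) _
    have := Finset.HasAntidiagonal.mem_antidiagonal.mp hij
    omega

noncomputable def powRelIdeal (p r : ℕ) : Ideal ℤ[X] :=
  Ideal.span {q : ℤ[X] | ∃ j, j ≤ r ∧ q = C ((p : ℤ) ^ (r - j)) * X ^ (p ^ j)}

theorem natCast_pow_mul_X_pow_mem_powRelIdeal {p : ℕ} (hp : 0 < p) (r : ℕ) {k : ℕ} (hk : k ≠ 0) :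
    ((p ^ (r - Nat.log p k) : ℕ) : ℤ[X]) * X ^ k ∈ powRelIdeal p r := by
  set t := min r (Nat.log p k)
  have hpt : p ^ t ≤ k :=
    (Nat.pow_le_pow_right hp (min_le_right _ _)).trans (Nat.pow_log_le_self p hk)
  have hrel : C ((p : ℤ) ^ (r - t)) * X ^ (p ^ t) ∈ powRelIdeal p r :=
    Ideal.subset_span ⟨t, min_le_left _ _, rfl⟩
  have hsplit : ((p ^ (r - Nat.log p k) : ℕ) : ℤ[X]) * X ^ k =
      X ^ (k - p ^ t) * (C ((p : ℤ) ^ (r - t)) * X ^ (p ^ t)) := by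
    rw [show r - t = r - Nat.log p k by omega, ← mul_assoc, mul_comm (X ^ _), mul_assoc,
      ← pow_add, Nat.sub_add_cancel hpt]
    simp
  exact hsplit ▸ Ideal.mul_mem_left _ _ hrel

theorem pow_dvd_of_natCast_mul_X_pow_mem_powRelIdeal {p : ℕ} (hp : 1 < p) (r k n : ℕ)
    (hn : (n : ℤ[X]) * X ^ k ∈ powRelIdeal p r) : p ^ (r - Nat.log p k) ∣ n := by
  have hgen : ∀ q ∈ {q : ℤ[X] | ∃ j, j ≤ r ∧ q = C ((p : ℤ) ^ (r - j)) * X ^ (p ^ j)},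
      ∀ m ≤ k, ((p ^ (r - Nat.log p k) : ℕ) : ℤ) ∣ q.coeff m := by
    rintro q ⟨j, hj, rfl⟩ m hm
    rw [coeff_C_mul, coeff_X_pow]
    split_ifs with hmj
    · have : j ≤ Nat.log p k := Nat.le_log_of_pow_le hp (hmj ▸ hm)
      rw [mul_one, Nat.cast_pow]
      exact pow_dvd_pow _ (by omega)
    · rw [mul_zero]
      exact dvd_zero _
  have := dvd_coeff_of_mem_span hgen hn k le_rfl
  rw [← C_eq_natCast, coeff_C_mul_X_pow, if_pos rfl] at this
  exact_mod_cast this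

theorem addOrderOf_mk_X_pow_powRelIdeal {p : ℕ} (hp : 1 < p) (r : ℕ) {k : ℕ} (hk : k ≠ 0) :
    addOrderOf (Ideal.Quotient.mk (powRelIdeal p r) (X ^ k)) = p ^ (r - Nat.log p k) := by
  refine Nat.dvd_right_iff_eq.mp fun n => ?_
  rw [addOrderOf_dvd_iff_nsmul_eq_zero, ← map_nsmul, Ideal.Quotient.eq_zero_iff_mem, nsmul_eq_mul]
  refine ⟨pow_dvd_of_natCast_mul_X_pow_mem_powRelIdeal hp r k n, ?_⟩
  rintro ⟨m, rfl⟩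
  rw [Nat.cast_mul, mul_right_comm]
  exact Ideal.mul_mem_right _ _ (natCast_pow_mul_X_pow_mem_powRelIdeal (by omega) r hk)

open Polynomial in
theorem stmt_15_general (p r k : ℕ) (hp : p.Prime) (hk : 1 ≤ k) :
    addOrderOf ((Ideal.Quotient.mk (Ideal.span
        {q : Polynomial ℤ | ∃ j, j ≤ r ∧ q = C ((p : ℤ) ^ (r - j)) * X ^ (p ^ j)}))
      ((X : Polynomial ℤ) ^ k)) =
      p ^ (r - ((Finset.Icc 1 k).filter (fun j => p ^ j ≤ k)).card) := by
  rw [Nat.card_filter_Icc_pow_le hp.one_lt]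
  exact addOrderOf_mk_X_pow_powRelIdeal hp.one_lt r (by omega)

open Polynomial in
/-- In `J_{p,r} = ℤ[ω]/⟨p^{r-j} ω^{p^j} : 0 ≤ j ≤ r⟩` the additive order of `ω^k` (`k ≥ 1`)
is `p^{r-s}` where `s = #{j ≥ 1 : p^j ≤ k}`; in particular `ω^k = 0` when `k ≥ p^r`. -/
theorem stmt_15 (p r k : ℕ) (hp : p.Prime) (hr : 1 ≤ r) (hk : 1 ≤ k) :
    addOrderOf ((Ideal.Quotient.mk (Ideal.span
        {q : Polynomial ℤ | ∃ j, j ≤ r ∧ q = C ((p : ℤ) ^ (r - j)) * X ^ (p ^ j)}))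
      ((X : Polynomial ℤ) ^ k)) =
      p ^ (r - ((Finset.Icc 1 k).filter (fun j => p ^ j ≤ k)).card) :=
  stmt_15_general p r k hp hk
end

section
/- In an anticommutative graded ring, suppose η_1, ..., η_n are odd-degree elements such that the product η_1 ⋯ η_n generates an infinite cyclic group (is a ℤ-basis element of its degree component). Then the 2^n monomials {η_I = ∏_{i∈I} η_i : I ⊆ {1,...,n}} are linearly independent over ℤ, and no η_I is divisible by an integer a > 1 in the ring (i.e., each η_I generates a direct ℤ-summand). -/
/-!
Reordering a product of anticommuting elements changes it only by a sign, and a product with a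
repeated factor vanishes. Hence `η_I * η_{Iᶜ} = ± η_{1…n}` while `η_I * η_{Jᶜ} = 0` for `I ⊄ J`.
Multiplying a relation `∑ g_I η_I = 0` by `η_{Jᶜ}` for `J` minimal with `g_J ≠ 0` gives
`± g_J η_{1…n} = 0`, so `g_J = 0`; and `η_I = a • x` gives `η_{1…n} = ± a • (x * η_{Iᶜ})`.
-/

section Anticommuting

variable {ι A : Type*} [Ring A] {η : ι → A}

theorem List.exists_units_prod_map_eq_smul_of_perm (hanti : ∀ i j, η i * η j = -(η j * η i))
    {l₁ l₂ : List ι} (h : l₁.Perm l₂) :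
    ∃ ε : ℤˣ, (l₁.map η).prod = (ε : ℤ) • (l₂.map η).prod := by
  induction h with
  | nil => exact ⟨1, by simp⟩
  | cons x _ ih =>
    obtain ⟨ε, hε⟩ := ih
    exact ⟨ε, by simp only [List.map_cons, List.prod_cons, hε, mul_smul_comm]⟩
  | swap x y l =>
    refine ⟨-1, ?_⟩
    simp only [List.map_cons, List.prod_cons, ← mul_assoc, hanti y x]
    simp
  | trans _ _ ih₁ ih₂ =>
    obtain ⟨ε₁, h₁⟩ := ih₁
    obtain ⟨ε₂, h₂⟩ := ih₂
    exact ⟨ε₁ * ε₂, by rw [h₁, h₂, smul_smul, Units.val_mul]⟩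

theorem List.prod_map_eq_zero_of_not_nodup (hanti : ∀ i j, η i * η j = -(η j * η i))
    (hsq : ∀ i, η i * η i = 0) {l : List ι} (hl : ¬ l.Nodup) : (l.map η).prod = 0 := by
  obtain ⟨x, hx⟩ : ∃ x, List.Sublist [x, x] l := by simpa [List.nodup_iff_sublist] using hl
  obtain ⟨rest, hperm⟩ := hx.exists_perm_append
  obtain ⟨ε, hε⟩ := List.exists_units_prod_map_eq_smul_of_perm hanti hperm
  simp [hε, ← mul_assoc, hsq]

variable [LinearOrder ι]

/-- The monomial `η_I`. -/
def orderedProd (η : ι → A) (I : Finset ι) : A :=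
  ((I.sort (· ≤ ·)).map η).prod

variable [Fintype ι]

theorem exists_units_orderedProd_mul_compl
    (hanti : ∀ i j, η i * η j = -(η j * η i)) (I : Finset ι) :
    ∃ ε : ℤˣ, orderedProd η I * orderedProd η Iᶜ = (ε : ℤ) • orderedProd η Finset.univ := by
  have hperm : (I.sort (· ≤ ·) ++ Iᶜ.sort (· ≤ ·)).Perm (Finset.univ.sort (· ≤ ·)) := by
    refine (List.perm_ext_iff_of_nodup ?_ (Finset.sort_nodup _ _)).2 (fun x => ?_)
    · refine List.nodup_append.2 ⟨Finset.sort_nodup _ _, Finset.sort_nodup _ _, ?_⟩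
      rintro a ha _ hb rfl
      simp_all
    · by_cases hx : x ∈ I <;> simp [hx]
  obtain ⟨ε, hε⟩ := List.exists_units_prod_map_eq_smul_of_perm hanti hperm
  exact ⟨ε, by rw [orderedProd, orderedProd, ← List.prod_append, ← List.map_append, hε]; rfl⟩

theorem orderedProd_mul_compl_eq_zero_of_not_subset
    (hanti : ∀ i j, η i * η j = -(η j * η i)) (hsq : ∀ i, η i * η i = 0)
    {I J : Finset ι} (h : ¬ I ⊆ J) : orderedProd η I * orderedProd η Jᶜ = 0 := by
  obtain ⟨x, hxI, hxJ⟩ := Finset.not_subset.mp h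
  rw [orderedProd, orderedProd, ← List.prod_append, ← List.map_append]
  refine List.prod_map_eq_zero_of_not_nodup hanti hsq fun hnd => ?_
  exact List.disjoint_of_nodup_append hnd (by simpa using hxI) (by simpa using hxJ)

theorem linearIndependent_orderedProd (hanti : ∀ i j, η i * η j = -(η j * η i))
    (hsq : ∀ i, η i * η i = 0) (hord : ∀ m : ℤ, m • orderedProd η Finset.univ = 0 → m = 0) :
    LinearIndependent ℤ (orderedProd η) := by
  rw [linearIndependent_iff']
  intro s g hsum J₀ hJ₀s
  by_contra hJ₀
  obtain ⟨J, hJ⟩ := exists_minimal_of_wellFoundedLT (fun I => I ∈ s ∧ g I ≠ 0) ⟨J₀, hJ₀s, hJ₀⟩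
  have hkill : ∀ I ∈ s, I ≠ J → g I • orderedProd η I * orderedProd η Jᶜ = 0 := by
    intro I hIs hIJ
    by_cases hgI : g I = 0
    · simp [hgI]
    · have hsub : ¬ I ⊆ J := fun hle => hIJ (hJ.eq_of_le ⟨hIs, hgI⟩ hle)
      rw [smul_mul_assoc, orderedProd_mul_compl_eq_zero_of_not_subset hanti hsq hsub, smul_zero]
  obtain ⟨ε, hε⟩ := exists_units_orderedProd_mul_compl hanti J
  have hJzero : ((ε : ℤ) * g J) • orderedProd η Finset.univ = 0 := by
    calc ((ε : ℤ) * g J) • orderedProd η Finset.univ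
        = (∑ I ∈ s, g I • orderedProd η I) * orderedProd η Jᶜ := by
          rw [Finset.sum_mul, Finset.sum_eq_single J hkill (absurd hJ.prop.1), smul_mul_assoc,
            hε, smul_smul, mul_comm]
      _ = 0 := by rw [hsum, zero_mul]
  exact hJ.prop.2 ((Units.mul_right_eq_zero ε).1 (hord _ hJzero))

theorem isUnit_of_orderedProd_eq_smul (hanti : ∀ i j, η i * η j = -(η j * η i))
    (hgen : ∀ (a : ℤ) (x : A), orderedProd η Finset.univ = a • x → IsUnit a)
    (I : Finset ι) (a : ℤ) (x : A) (hx : orderedProd η I = a • x) : IsUnit a := by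
  obtain ⟨ε, hε⟩ := exists_units_orderedProd_mul_compl hanti I
  have huniv : orderedProd η Finset.univ = ((ε⁻¹ : ℤˣ) * a) • (x * orderedProd η Iᶜ) := by
    rw [mul_smul, ← smul_mul_assoc, ← hx, hε, ← Units.smul_def, ← Units.smul_def, inv_smul_smul]
  exact isUnit_of_mul_isUnit_right (hgen _ _ huniv)

end Anticommuting

theorem stmt_16_general (n : ℕ) {A : Type*} [Ring A] (η : Fin n → A)
    (hanti : ∀ i j, η i * η j = - (η j * η i))
    (hsq : ∀ i, η i * η i = 0)
    (hord : ∀ m : ℤ, m • ((List.finRange n).map η).prod = 0 → m = 0)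
    (hgen : ∀ (a : ℤ) (x : A), ((List.finRange n).map η).prod = a • x → a = 1 ∨ a = -1) :
    LinearIndependent ℤ (fun I : Finset (Fin n) => ((I.sort (· ≤ ·)).map η).prod) ∧
    ∀ (I : Finset (Fin n)) (a : ℤ), 1 < a →
      ¬ ∃ x : A, ((I.sort (· ≤ ·)).map η).prod = a • x := by
  have huniv : orderedProd η Finset.univ = ((List.finRange n).map η).prod := by
    rw [orderedProd, Fin.sort_univ]
  refine ⟨linearIndependent_orderedProd hanti hsq (huniv ▸ hord), ?_⟩
  rintro I a ha ⟨x, hx⟩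
  have hunit := isUnit_of_orderedProd_eq_smul hanti
    (fun b y hy => Int.isUnit_iff.2 (hgen b y (huniv ▸ hy))) I a x hx
  rcases Int.isUnit_iff.1 hunit with rfl | rfl <;> omega

/-- In a graded ring, if `η_1,...,η_n` are anticommuting odd-degree elements of square
zero whose full product generates an infinite cyclic direct summand, then the `2^n`
monomials `η_I` are linearly independent over `ℤ` and no `η_I` is divisible by an
integer `a > 1`. -/
theorem stmt_16 (n : ℕ) {A : Type*} [Ring A] (𝒜 : ℕ → AddSubgroup A) [GradedRing 𝒜]
    (d : Fin n → ℕ) (hodd : ∀ i, Odd (d i))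
    (η : Fin n → A) (hmem : ∀ i, η i ∈ 𝒜 (d i))
    (hanti : ∀ i j, η i * η j = - (η j * η i))
    (hsq : ∀ i, η i * η i = 0)
    (hord : ∀ m : ℤ, m • ((List.finRange n).map η).prod = 0 → m = 0)
    (hgen : ∀ (a : ℤ) (x : A), ((List.finRange n).map η).prod = a • x → a = 1 ∨ a = -1) :
    LinearIndependent ℤ (fun I : Finset (Fin n) => ((I.sort (· ≤ ·)).map η).prod) ∧
    ∀ (I : Finset (Fin n)) (a : ℤ), 1 < a →
      ¬ ∃ x : A, ((I.sort (· ≤ ·)).map η).prod = a • x :=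
  stmt_16_general n η hanti hsq hord hgen
end
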